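/- For every real ν ≥ 1/2 and every complex z with Re z > 0, the modified Bessel function of the first kind satisfies |I_ν(z)| ≤ |z/Re z|^ν I_ν(Re z). -/

import Mathlib

/-!
Since `|e^{zt}| = e^{t Re z}` and the Poisson weight `(1 - t²)^{ν - 1/2}` is nonnegative, the
triangle inequality for integrals bounds the Poisson integral of `I_ν(z)` by that of `I_ν(Re z)`;
the prefactors then differ exactly by `(|z| / Re z)^ν`.
-/

/-- The modified Bessel function of the first kind `I_ν(z)` via the Poisson integral
representation `I_ν(z) = (1/(√π Γ(ν+1/2))) (z/2)^ν ∫_{-1}^1 (1-t²)^{ν-1/2} e^{zt} dt`. -/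
noncomputable def besselI (ν : ℝ) (z : ℂ) : ℂ :=
  (1 / ((Real.sqrt Real.pi : ℂ) * (Real.Gamma (ν + 1/2) : ℂ))) * (z / 2) ^ (ν : ℂ) *
    ∫ t in (-1:ℝ)..1, (((1 - t ^ 2 : ℝ) ^ (ν - 1/2) : ℝ) : ℂ) * Complex.exp (z * (t : ℂ))

/-- The real-valued `I_ν(x)` for `x > 0`. -/
noncomputable def besselIr (ν x : ℝ) : ℝ :=
  (1 / (Real.sqrt Real.pi * Real.Gamma (ν + 1/2))) * (x / 2) ^ ν *
    ∫ t in (-1:ℝ)..1, (1 - t ^ 2) ^ (ν - 1/2) * Real.exp (x * t)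

open Real

lemma norm_integral_mul_cexp_le {a b : ℝ} (hab : a ≤ b) {w : ℝ → ℝ}
    (hw : ∀ t ∈ Set.Icc a b, 0 ≤ w t) (z : ℂ) :
    ‖∫ t in a..b, (w t : ℂ) * Complex.exp (z * t)‖ ≤
      ∫ t in a..b, w t * Real.exp (z.re * t) := by
  refine (intervalIntegral.norm_integral_le_integral_norm hab).trans_eq ?_
  refine intervalIntegral.integral_congr fun t ht => ?_
  rw [Set.uIcc_of_le hab] at ht
  simp [Complex.norm_exp, abs_of_nonneg (hw t ht)]

lemma one_sub_sq_rpow_nonneg (s : ℝ) : ∀ t ∈ Set.Icc (-1 : ℝ) 1, 0 ≤ (1 - t ^ 2) ^ s :=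
  fun t ht => rpow_nonneg (by nlinarith [ht.1, ht.2]) s

lemma norm_besselI_le (ν : ℝ) (hΓ : 0 ≤ Gamma (ν + 1/2)) (z : ℂ) :
    ‖besselI ν z‖ ≤ 1 / (√π * Gamma (ν + 1/2)) * (‖z‖ / 2) ^ ν *
      ∫ t in (-1:ℝ)..1, (1 - t ^ 2) ^ (ν - 1/2) * Real.exp (z.re * t) := by
  have hprefactor : ‖(1 / ((√π : ℂ) * (Gamma (ν + 1/2) : ℂ))) * (z / 2) ^ (ν : ℂ)‖ =
      1 / (√π * Gamma (ν + 1/2)) * (‖z‖ / 2) ^ ν := by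
    rw [norm_mul, Complex.norm_cpow_real, norm_div, norm_one, norm_mul, Complex.norm_real,
      Complex.norm_real, norm_of_nonneg (sqrt_nonneg π), norm_of_nonneg hΓ, norm_div,
      Complex.norm_two]
  rw [besselI, norm_mul, hprefactor]
  gcongr
  exact norm_integral_mul_cexp_le (by norm_num) (one_sub_sq_rpow_nonneg _) z

/-- For `ν ≥ 1/2` and `Re z > 0`, `|I_ν(z)| ≤ |z / Re z|^ν I_ν(Re z)`. -/
theorem abs_besselI_le (ν : ℝ) (hν : 1/2 ≤ ν) (z : ℂ) (hz : 0 < z.re) :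
    ‖besselI ν z‖ ≤ (‖z‖ / z.re) ^ ν * besselIr ν z.re := by
  have hΓ : 0 < Gamma (ν + 1/2) := Gamma_pos_of_pos (by linarith)
  have hnorm : 0 < ‖z‖ := hz.trans_le (Complex.re_le_norm z)
  have hsplit : (‖z‖ / 2) ^ ν = (‖z‖ / z.re) ^ ν * (z.re / 2) ^ ν := by
    rw [← mul_rpow (by positivity) (by positivity)]
    field_simp
  calc ‖besselI ν z‖
      ≤ 1 / (√π * Gamma (ν + 1/2)) * (‖z‖ / 2) ^ ν *
          ∫ t in (-1:ℝ)..1, (1 - t ^ 2) ^ (ν - 1/2) * Real.exp (z.re * t) :=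
        norm_besselI_le ν hΓ.le z
    _ = (‖z‖ / z.re) ^ ν * besselIr ν z.re := by
        rw [besselIr, hsplit]
        ring
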